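/- Let ℓ: gl(n,ℝ) → gl(n,ℝ) be the map taking a matrix to its lower-triangular part (including the diagonal), and let g(u,v) = tr(ℓ(u)ᵀℓ(v)) + tr((u+uᵀ)(v+vᵀ)) be the corresponding inner product on gl(n,ℝ). Then for every skew-symmetric ξ ∈ so(n) and every upper triangular u ∈ gl(n,ℝ), g(ξ,u) = 0. -/
import Mathlib

open Matrix

/-- The lower-triangular part (including the diagonal) of a matrix. -/
def lowerPart {n : ℕ} (u : Matrix (Fin n) (Fin n) ℝ) : Matrix (Fin n) (Fin n) ℝ :=
  fun i j => if j ≤ i then u i j else 0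

/-- The inner product `g(u,v) = tr(ℓ(u)ᵀ ℓ(v)) + tr((u+uᵀ)(v+vᵀ))` on `gl(n,ℝ)`. -/
noncomputable def glMetric {n : ℕ} (u v : Matrix (Fin n) (Fin n) ℝ) : ℝ :=
  ((lowerPart u)ᵀ * lowerPart v).trace + ((u + uᵀ) * (v + vᵀ)).trace

/-- With respect to the inner product `g`, skew-symmetric matrices are orthogonal to
upper triangular matrices: for `ξ ∈ so(n)` and `u` upper triangular, `g(ξ, u) = 0`. -/
theorem skew_orthogonal_upper_triangular {n : ℕ}
    (ξ u : Matrix (Fin n) (Fin n) ℝ)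
    (hξ : ξᵀ = -ξ) (hu : u.BlockTriangular id) :
    glMetric ξ u = 0 := by
  have hdiag : ∀ i, ξ i i = 0 := by
    intro i
    have := congrFun (congrFun hξ i) i
    simp [Matrix.transpose_apply] at this
    linarith
  have h2 : ξ + ξᵀ = 0 := by rw [hξ]; simp
  unfold glMetric
  rw [h2, Matrix.zero_mul, Matrix.trace_zero, add_zero]
  rw [Matrix.trace, Finset.sum_eq_zero]
  intro i _
  simp only [Matrix.diag_apply, Matrix.mul_apply, Matrix.transpose_apply]
  apply Finset.sum_eq_zero
  intro j _
  unfold lowerPart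
  rcases lt_trichotomy i j with h | h | h
  · have : u j i = 0 := hu (by simpa using h)
    simp [this]
  · subst h; simp [hdiag]
  · simp [not_le.mpr h]
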